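/- arXiv:2003.07250 — 5 statements merged into one kernel-verified Lean document; each statement's English description precedes it below -/
import Mathlib

section
/- For every real number x, the orbit of x under the map y ↦ cosh(y)² escapes to infinity: the sequence n ↦ (y ↦ cosh(y)²)^{∘n}(x) tends to +∞ as n → ∞. In particular, the orbits of the critical values 0 and 1 of cosh² lie in the nonnegative real axis and escape to infinity. -/
lemma coshSq_step (y : ℝ) (hy : 1 ≤ y) : y + 1 ≤ Real.cosh y ^ 2 := by
  have hs : y ≤ Real.sinh y := Real.self_le_sinh_iff.mpr (by linarith)
  have h := Real.cosh_sq y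
  nlinarith [hs, hy]

lemma coshSq_orbit_lb (x : ℝ) : ∀ n : ℕ,
    (n : ℝ) + 1 ≤ (fun y : ℝ => Real.cosh y ^ 2)^[n + 1] x := by
  intro n
  induction n with
  | zero =>
    simp only [Nat.cast_zero, zero_add, Function.iterate_one]
    nlinarith [Real.one_le_cosh x]
  | succ k ih =>
    have : (fun y : ℝ => Real.cosh y ^ 2)^[k + 2] x
        = Real.cosh ((fun y : ℝ => Real.cosh y ^ 2)^[k + 1] x) ^ 2 := by
      rw [Function.iterate_succ_apply']
    rw [this]
    have hk := coshSq_step ((fun y : ℝ => Real.cosh y ^ 2)^[k + 1] x) (by linarith)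
    push_cast
    linarith

/-- For every real `x`, the orbit of `x` under `y ↦ cosh(y)²`
escapes to infinity. -/
theorem coshSq_orbit_escapes (x : ℝ) :
    Filter.Tendsto (fun n : ℕ => (fun y : ℝ => Real.cosh y ^ 2)^[n] x)
      Filter.atTop Filter.atTop := by
  apply Filter.tendsto_atTop_mono' _ _ (tendsto_natCast_atTop_atTop (R := ℝ))
  filter_upwards [Filter.eventually_ge_atTop 1] with n hn
  obtain ⟨k, rfl⟩ := Nat.exists_eq_add_of_le hn
  have := coshSq_orbit_lb x k
  have h2 : 1 + k = k + 1 := by omega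
  rw [h2]
  push_cast
  linarith
end

section
/- (Fibers of the model set are closed rays.) Let s : ℕ → ℤ × {L,R} be an external address, and define recursively T₀(t) = t and T_{n+1}(t) = exp(T_n(t)) − 1 − 2π·|s_{n+1}|, where |s_j| denotes the absolute value of the integer part of s_j. If there exists t ≥ 0 with T_n(t) ≥ 0 for all n ≥ 0 (i.e. s is exponentially bounded), then there exists t₀ ≥ 0 such that {t ∈ ℝ : t ≥ 0 and T_n(t) ≥ 0 for all n ≥ 0} = [t₀, ∞). -/
/-- `modelT s n t` is the first coordinate `T(ℱⁿ(t,s))` of the `n`-th iterate of the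
model map `ℱ(t,s) = (e^t − 1 − 2π|s₁|, σ(s))` over the external address
`s : ℕ → ℤ × {L,R}` (with `{L,R}` encoded by `Bool`). -/
noncomputable def modelT (s : ℕ → ℤ × Bool) : ℕ → ℝ → ℝ
  | 0, t => t
  | n + 1, t => Real.exp (modelT s n t) - 1 - 2 * Real.pi * |(((s (n + 1)).1 : ℤ) : ℝ)|

lemma modelT_monotone (s : ℕ → ℤ × Bool) (n : ℕ) : Monotone (modelT s n) := by
  induction n with
  | zero => exact fun a b h => h
  | succ n ih =>
    intro a b h
    simp only [modelT]
    have := Real.exp_le_exp.mpr (ih h)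
    linarith

lemma modelT_continuous (s : ℕ → ℤ × Bool) (n : ℕ) : Continuous (modelT s n) := by
  induction n with
  | zero => exact continuous_id
  | succ n ih =>
    simp only [modelT]
    fun_prop

/-- (Fibers of the model set are closed rays.) If the external
address `s` is exponentially bounded, i.e. there is some `t ≥ 0` with `T_n(t) ≥ 0`
for all `n`, then the fiber `{t ≥ 0 : ∀ n, T_n(t) ≥ 0}` of `J(ℱ)` over `s` is a
closed ray `[t₀, ∞)` for some `t₀ ≥ 0`. -/
theorem model_fiber_is_closed_ray (s : ℕ → ℤ × Bool)
    (hs : ∃ t : ℝ, 0 ≤ t ∧ ∀ n : ℕ, 0 ≤ modelT s n t) :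
    ∃ t₀ : ℝ, 0 ≤ t₀ ∧
      {t : ℝ | 0 ≤ t ∧ ∀ n : ℕ, 0 ≤ modelT s n t} = Set.Ici t₀ := by
  set S : Set ℝ := {t : ℝ | 0 ≤ t ∧ ∀ n : ℕ, 0 ≤ modelT s n t} with hS
  have hne : S.Nonempty := hs
  have hbdd : BddBelow S := ⟨0, fun t ht => ht.1⟩
  have hclosed : IsClosed S := by
    have : S = {t : ℝ | 0 ≤ t} ∩ ⋂ n : ℕ, {t : ℝ | 0 ≤ modelT s n t} := by
      ext t; simp [hS, Set.mem_iInter]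
    rw [this]
    exact (isClosed_Ici (a := (0:ℝ))).inter
      (isClosed_iInter fun n => isClosed_le continuous_const (modelT_continuous s n))
  have hup : ∀ t ∈ S, ∀ t', t ≤ t' → t' ∈ S := by
    intro t ht t' htt'
    exact ⟨le_trans ht.1 htt', fun n => le_trans (ht.2 n) (modelT_monotone s n htt')⟩
  refine ⟨sInf S, le_csInf hne (fun t ht => ht.1), ?_⟩
  ext t
  constructor
  · intro ht; exact csInf_le hbdd ht
  · intro ht
    exact hup _ (hclosed.csInf_mem hne hbdd) _ ht
end

section
/- (Orbit separation in the cosine model.) Let s : ℕ → ℤ × {L,R} be an external address, and define recursively T₀(t) = t and T_{n+1}(t) = exp(T_n(t)) − 1 − 2π·|s_{n+1}|, where |s_j| denotes the absolute value of the integer part of s_j. Suppose t, t' ∈ ℝ satisfy t < t' and T_n(t) ≥ 0 for all n ≥ 0. Then T_n(t') − T_n(t) → ∞ as n → ∞. -/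
/-- `e^x - x` is monotone on `[0, ∞)`. -/
lemma exp_sub_mono {x y : ℝ} (hy : 0 ≤ y) (hxy : y ≤ x) :
    Real.exp y - y ≤ Real.exp x - x := by
  have h1 : Real.exp y * (1 + (x - y)) ≤ Real.exp y * Real.exp (x - y) := by
    have := Real.add_one_le_exp (x - y)
    nlinarith [Real.exp_pos y]
  have h2 : Real.exp y * Real.exp (x - y) = Real.exp x := by
    rw [← Real.exp_add]; ring_nf
  nlinarith [Real.one_le_exp hy]

/-- (Orbit separation in the cosine model.) If `t < t'` and the
orbit of `t` over the address `s` stays nonnegative, then the orbits of `t` and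
`t'` become arbitrarily far apart: `T_n(t') − T_n(t) → ∞`. -/
theorem model_orbit_separation (s : ℕ → ℤ × Bool) (t t' : ℝ) (h : t < t')
    (ht : ∀ n : ℕ, 0 ≤ modelT s n t) :
    Filter.Tendsto (fun n : ℕ => modelT s n t' - modelT s n t)
      Filter.atTop Filter.atTop := by
  set d : ℕ → ℝ := fun n => modelT s n t' - modelT s n t with hd
  set d0 : ℝ := t' - t with hd0
  have hd0pos : 0 < d0 := by simp [hd0]; linarith
  set c : ℝ := Real.exp d0 - 1 - d0 with hc
  have hcpos : 0 < c := by
    have := Real.add_one_lt_exp (ne_of_gt hd0pos)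
    simp only [hc]; linarith
  have key : ∀ n, d0 + n * c ≤ d n := by
    intro n
    induction n with
    | zero => simp [hd, hd0, modelT]
    | succ n ih =>
      have hdn : d0 ≤ d n := by
        have : (0:ℝ) ≤ n * c := by positivity
        linarith
      have hstep : Real.exp (d n) - 1 ≤ d (n + 1) := by
        have e1 : d (n + 1) = Real.exp (modelT s n t') - Real.exp (modelT s n t) := by
          simp only [hd, modelT]; ring
        have e2 : Real.exp (modelT s n t') = Real.exp (modelT s n t) * Real.exp (d n) := by
          rw [← Real.exp_add]; simp [hd]
        have h3 : (1:ℝ) ≤ Real.exp (modelT s n t) := Real.one_le_exp (ht n)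
        have h4 : (1:ℝ) ≤ Real.exp (d n) := Real.one_le_exp (by linarith)
        rw [e1, e2]; nlinarith
      have h5 : Real.exp d0 - d0 ≤ Real.exp (d n) - d n :=
        exp_sub_mono (le_of_lt hd0pos) hdn
      have : d n + c ≤ d (n + 1) := by
        simp only [hc] at *; linarith
      push_cast; linarith
  apply Filter.tendsto_atTop_mono key
  apply Filter.tendsto_atTop_add_const_left
  exact Filter.Tendsto.atTop_mul_const hcpos tendsto_natCast_atTop_atTop
end

section
/- (Relation between cosine and exponential models.) The map h : ([0,∞) × ℤ^ℕ) × {L,R}^ℕ → ℳ defined by h(t, s, ω) = (t, ((s₀,ω₀), (s₁,ω₁), (s₂,ω₂), …)) is a homeomorphism, where: the domain carries the product of the standard topology on [0,∞), the order topology of the lexicographic order on ℤ^ℕ, and the product of discrete topologies on {L,R}^ℕ; and ℳ = [0,∞) × (ℤ×{L,R})^ℕ carries the topology τ_ℳ. -/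
/-- The space of external addresses `(ℤ × {L,R})^ℕ` of the cosine model, with
`L, R` encoded by `false, true : Bool`. -/
def CSeq : Type := ℕ → ℤ × Bool

/-- The linear order on `ℤ × {L,R}`: `(n,*) < (m,⋆)` iff `* = ⋆ = R` and `n < m`,
or `* = ⋆ = L` and `m < n`, or `* = L` and `⋆ = R`. -/
def symbLt : ℤ × Bool → ℤ × Bool → Prop := fun p q =>
  (p.2 = true ∧ q.2 = true ∧ p.1 < q.1) ∨
    (p.2 = false ∧ q.2 = false ∧ q.1 < p.1) ∨
    (p.2 = false ∧ q.2 = true)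

/-- The induced lexicographic order `<ₗ` on `(ℤ × {L,R})^ℕ`. -/
def lexLt (s t : CSeq) : Prop :=
  ∃ n : ℕ, (∀ k < n, s k = t k) ∧ symbLt (s n) (t n)

/-- The cyclic order `[s, a, t]` induced by `<ₗ`. -/
def cycBtw (s a t : CSeq) : Prop :=
  (lexLt s a ∧ lexLt a t) ∨ (lexLt a t ∧ lexLt t s) ∨ (lexLt t s ∧ lexLt s a)

/-- The open interval `(s, t)` of the cyclic order. -/
def cycInterval (s t : CSeq) : Set CSeq := {x | cycBtw s x t}

/-- The cyclic order topology on `(ℤ × {L,R})^ℕ`, generated by the open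
intervals of the cyclic order. -/
instance : TopologicalSpace CSeq :=
  TopologicalSpace.generateFrom {I | ∃ s t : CSeq, I = cycInterval s t}

/-- The space `ℤ^ℕ` of external addresses of the exponential model. -/
def ZSeq : Type := ℕ → ℤ

/-- The lexicographic order on `ℤ^ℕ`, induced by the usual order of `ℤ`. -/
def zlexLt (s t : ZSeq) : Prop :=
  ∃ n : ℕ, (∀ k < n, s k = t k) ∧ s n < t n

/-- The order topology of the lexicographic order on `ℤ^ℕ`, generated by the
open rays. -/
instance : TopologicalSpace ZSeq :=
  TopologicalSpace.generateFrom
    ({S | ∃ a : ZSeq, S = {x | zlexLt a x}} ∪ {S | ∃ a : ZSeq, S = {x | zlexLt x a}})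

/- ## Auxiliary lemmas -/

lemma symbLt_irrefl (p : ℤ × Bool) : ¬ symbLt p p := by
  rintro (⟨_, _, h⟩ | ⟨_, _, h⟩ | ⟨h1, h2⟩) <;> simp_all

lemma symbLt_asymm {p q : ℤ × Bool} (h1 : symbLt p q) (h2 : symbLt q p) : False := by
  rcases h1 with ⟨a1, a2, a3⟩ | ⟨a1, a2, a3⟩ | ⟨a1, a2⟩ <;>
    rcases h2 with ⟨b1, b2, b3⟩ | ⟨b1, b2, b3⟩ | ⟨b1, b2⟩ <;> simp_all <;> omega

def cpred (p : ℤ × Bool) : ℤ × Bool := if p.2 then (p.1 - 1, true) else (p.1 + 1, false)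
def csucc (p : ℤ × Bool) : ℤ × Bool := if p.2 then (p.1 + 1, true) else (p.1 - 1, false)

lemma symbLt_cpred (p : ℤ × Bool) : symbLt (cpred p) p := by
  cases hp : p.2 <;> simp [cpred, symbLt, hp] <;> omega

lemma symbLt_csucc (p : ℤ × Bool) : symbLt p (csucc p) := by
  cases hp : p.2 <;> simp [csucc, symbLt, hp] <;> omega

lemma symbLt_cpred_csucc (p : ℤ × Bool) : symbLt (cpred p) (csucc p) := by
  cases hp : p.2 <;> simp [cpred, csucc, symbLt, hp] <;> omega

lemma lexLt_asymm {s t : CSeq} (h1 : lexLt s t) (h2 : lexLt t s) : False := by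
  obtain ⟨m, hm, hs⟩ := h1
  obtain ⟨m', hm', hs'⟩ := h2
  rcases lt_trichotomy m m' with h | h | h
  · exact symbLt_irrefl _ ((hm' m h) ▸ hs)
  · subst h; exact symbLt_asymm hs hs'
  · exact symbLt_irrefl _ ((hm m' h) ▸ hs')

def below (x : CSeq) (n : ℕ) : CSeq := fun k => if k = n + 1 then cpred (x (n + 1)) else x k
def above (x : CSeq) (n : ℕ) : CSeq := fun k => if k = n + 1 then csucc (x (n + 1)) else x k

lemma lexLt_below (x : CSeq) (n : ℕ) : lexLt (below x n) x :=
  ⟨n + 1, fun k hk => if_neg (by omega), by simp [below, symbLt_cpred]⟩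

lemma lexLt_above (x : CSeq) (n : ℕ) : lexLt x (above x n) :=
  ⟨n + 1, fun k hk => (if_neg (by omega)).symm, by simp [above, symbLt_csucc]⟩

lemma lexLt_below_above (x : CSeq) (n : ℕ) : lexLt (below x n) (above x n) :=
  ⟨n + 1, fun k hk => by simp [below, above, if_neg (show k ≠ n+1 by omega)],
    by simp [below, above, symbLt_cpred_csucc]⟩

lemma between_prefix {x y : CSeq} {n : ℕ} (h1 : lexLt (below x n) y)
    (h2 : lexLt y (above x n)) : ∀ k ≤ n, y k = x k := by
  obtain ⟨m, hm, hs⟩ := h1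
  obtain ⟨m', hm', hs'⟩ := h2
  have hb : ∀ k, k ≠ n + 1 → below x n k = x k := fun k hk => if_neg hk
  have ha : ∀ k, k ≠ n + 1 → above x n k = x k := fun k hk => if_neg hk
  have hmge : n + 1 ≤ m := by
    by_contra hc
    push_neg at hc
    rcases lt_trichotomy m m' with h | h | h
    · have h3 := hm' m h
      rw [ha m (by omega)] at h3
      rw [hb m (by omega), h3] at hs
      exact symbLt_irrefl _ hs
    · subst h
      rw [hb m (by omega)] at hs
      rw [ha m (by omega)] at hs'
      exact symbLt_asymm hs hs'
    · have h3 := hm m' h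
      rw [hb m' (by omega)] at h3
      rw [ha m' (by omega), ← h3] at hs'
      exact symbLt_irrefl _ hs'
  have hm'ge : n + 1 ≤ m' := by
    by_contra hc
    push_neg at hc
    have h3 := hm m' (by omega)
    rw [hb m' (by omega)] at h3
    rw [ha m' (by omega), ← h3] at hs'
    exact symbLt_irrefl _ hs'
  intro k hk
  have h3 := hm k (by omega)
  rw [hb k (by omega)] at h3
  exact h3.symm

lemma isOpen_cycInterval (s t : CSeq) : IsOpen (cycInterval s t) :=
  TopologicalSpace.GenerateOpen.basic _ ⟨s, t, rfl⟩

lemma cseq_isOpen_of {S : Set CSeq}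
    (h : ∀ x ∈ S, ∃ n, ∀ y : CSeq, (∀ k ≤ n, y k = x k) → y ∈ S) : IsOpen S := by
  rw [isOpen_iff_forall_mem_open]
  intro x hx
  obtain ⟨n, hn⟩ := h x hx
  refine ⟨cycInterval (below x n) (above x n), ?_, isOpen_cycInterval _ _,
    Or.inl ⟨lexLt_below x n, lexLt_above x n⟩⟩
  intro y hy
  rcases hy with ⟨hay, hyb⟩ | ⟨_, hba⟩ | ⟨hba, _⟩
  · exact hn y (between_prefix hay hyb)
  · exact (lexLt_asymm (lexLt_below_above x n) hba).elim
  · exact (lexLt_asymm (lexLt_below_above x n) hba).elim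

/- ## ZSeq -/

def zbelow (x : ZSeq) (n : ℕ) : ZSeq := fun k => if k = n + 1 then x (n + 1) - 1 else x k
def zabove (x : ZSeq) (n : ℕ) : ZSeq := fun k => if k = n + 1 then x (n + 1) + 1 else x k

lemma zlexLt_below (x : ZSeq) (n : ℕ) : zlexLt (zbelow x n) x :=
  ⟨n + 1, fun k hk => if_neg (by omega), by simp [zbelow]⟩

lemma zlexLt_above (x : ZSeq) (n : ℕ) : zlexLt x (zabove x n) :=
  ⟨n + 1, fun k hk => (if_neg (by omega)).symm, by simp [zabove]⟩

lemma zbetween_prefix {x y : ZSeq} {n : ℕ} (h1 : zlexLt (zbelow x n) y)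
    (h2 : zlexLt y (zabove x n)) : ∀ k ≤ n, y k = x k := by
  obtain ⟨m, hm, hs⟩ := h1
  obtain ⟨m', hm', hs'⟩ := h2
  have hb : ∀ k, k ≠ n + 1 → zbelow x n k = x k := fun k hk => if_neg hk
  have ha : ∀ k, k ≠ n + 1 → zabove x n k = x k := fun k hk => if_neg hk
  have hmge : n + 1 ≤ m := by
    by_contra hc
    push_neg at hc
    rcases lt_trichotomy m m' with h | h | h
    · have h3 := hm' m h
      rw [ha m (by omega)] at h3
      rw [hb m (by omega), h3] at hs
      exact lt_irrefl _ hs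
    · subst h
      rw [hb m (by omega)] at hs
      rw [ha m (by omega)] at hs'
      exact absurd hs' (not_lt.mpr hs.le)
    · have h3 := hm m' h
      rw [hb m' (by omega)] at h3
      rw [ha m' (by omega), ← h3] at hs'
      exact lt_irrefl _ hs'
  have hm'ge : n + 1 ≤ m' := by
    by_contra hc
    push_neg at hc
    have h3 := hm m' (by omega)
    rw [hb m' (by omega)] at h3
    rw [ha m' (by omega), ← h3] at hs'
    exact lt_irrefl _ hs'
  intro k hk
  have h3 := hm k (by omega)
  rw [hb k (by omega)] at h3
  exact h3.symm

lemma zray1_isOpen (a : ZSeq) : IsOpen {z : ZSeq | zlexLt a z} :=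
  TopologicalSpace.GenerateOpen.basic _ (Or.inl ⟨a, rfl⟩)

lemma zray2_isOpen (a : ZSeq) : IsOpen {z : ZSeq | zlexLt z a} :=
  TopologicalSpace.GenerateOpen.basic _ (Or.inr ⟨a, rfl⟩)

lemma zseq_isOpen_of {S : Set ZSeq}
    (h : ∀ x ∈ S, ∃ n, ∀ y : ZSeq, (∀ k ≤ n, y k = x k) → y ∈ S) : IsOpen S := by
  rw [isOpen_iff_forall_mem_open]
  intro x hx
  obtain ⟨n, hn⟩ := h x hx
  refine ⟨{z | zlexLt (zbelow x n) z} ∩ {z | zlexLt z (zabove x n)}, ?_, ?_,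
    ⟨zlexLt_below x n, zlexLt_above x n⟩⟩
  · intro y ⟨h1, h2⟩
    exact hn y (zbetween_prefix h1 h2)
  · exact (zray1_isOpen _).inter (zray2_isOpen _)

/- ## Cylinders -/

lemma zCyl_isOpen (s : ZSeq) (m : ℕ) : IsOpen {z : ZSeq | ∀ k ≤ m, z k = s k} :=
  zseq_isOpen_of (fun z hz => ⟨m, fun t ht k hk => (ht k hk).trans (hz k hk)⟩)

lemma cCyl_isOpen (x : CSeq) (m : ℕ) : IsOpen {y : CSeq | ∀ k ≤ m, y k = x k} :=
  cseq_isOpen_of (fun z hz => ⟨m, fun t ht k hk => (ht k hk).trans (hz k hk)⟩)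

lemma boolCyl_isOpen (ω : ℕ → Bool) (m : ℕ) :
    IsOpen {w : ℕ → Bool | ∀ k ≤ m, w k = ω k} := by
  have he : {w : ℕ → Bool | ∀ k ≤ m, w k = ω k}
      = ⋂ k ∈ Finset.range (m + 1), {w : ℕ → Bool | w k = ω k} := by
    ext w; simp [Nat.lt_succ_iff]
  rw [he]
  apply isOpen_biInter_finset
  intro k _
  show IsOpen ((fun w : ℕ → Bool => w k) ⁻¹' {ω k})
  exact (continuous_apply k).isOpen_preimage _ (isOpen_discrete _)

/- ## The map -/

def phi (p : ZSeq × (ℕ → Bool)) : CSeq := fun n => (p.1 n, p.2 n)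

lemma ray1_preim (a : CSeq) : IsOpen (phi ⁻¹' {x | lexLt a x}) := by
  rw [isOpen_iff_forall_mem_open]
  rintro ⟨s, ω⟩ ⟨m, hm, hs⟩
  refine ⟨{z : ZSeq | ∀ k ≤ m, z k = s k} ×ˢ {w : ℕ → Bool | ∀ k ≤ m, w k = ω k}, ?_,
    (zCyl_isOpen s m).prod (boolCyl_isOpen ω m), fun k _ => rfl, fun k _ => rfl⟩
  rintro ⟨z, w⟩ ⟨hz, hw⟩
  have hz' : ∀ k ≤ m, z k = s k := hz
  have hw' : ∀ k ≤ m, w k = ω k := hw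
  refine ⟨m, fun k hk => (hm k hk).trans ?_, ?_⟩
  · show (s k, ω k) = (z k, w k)
    rw [hz' k hk.le, hw' k hk.le]
  · show symbLt (a m) (z m, w m)
    rw [hz' m le_rfl, hw' m le_rfl]
    exact hs

lemma ray2_preim (a : CSeq) : IsOpen (phi ⁻¹' {x | lexLt x a}) := by
  rw [isOpen_iff_forall_mem_open]
  rintro ⟨s, ω⟩ ⟨m, hm, hs⟩
  refine ⟨{z : ZSeq | ∀ k ≤ m, z k = s k} ×ˢ {w : ℕ → Bool | ∀ k ≤ m, w k = ω k}, ?_,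
    (zCyl_isOpen s m).prod (boolCyl_isOpen ω m), fun k _ => rfl, fun k _ => rfl⟩
  rintro ⟨z, w⟩ ⟨hz, hw⟩
  have hz' : ∀ k ≤ m, z k = s k := hz
  have hw' : ∀ k ≤ m, w k = ω k := hw
  refine ⟨m, fun k hk => ?_, ?_⟩
  · show (z k, w k) = a k
    rw [hz' k hk.le, hw' k hk.le]
    exact hm k hk
  · show symbLt (z m, w m) (a m)
    rw [hz' m le_rfl, hw' m le_rfl]
    exact hs

lemma phi_continuous : Continuous phi := by
  apply continuous_generateFrom_iff.mpr
  rintro I ⟨s, t, rfl⟩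
  have he : phi ⁻¹' cycInterval s t =
      (phi ⁻¹' {x | lexLt s x} ∩ phi ⁻¹' {x | lexLt x t}) ∪
        ((phi ⁻¹' {x | lexLt x t} ∩ {p | lexLt t s}) ∪
          ({p : ZSeq × (ℕ → Bool) | lexLt t s} ∩ phi ⁻¹' {x | lexLt s x})) := by
    ext p
    simp only [cycInterval, cycBtw, Set.mem_preimage, Set.mem_setOf_eq, Set.mem_union,
      Set.mem_inter_iff]
  rw [he]
  have hK : IsOpen {p : ZSeq × (ℕ → Bool) | lexLt t s} := by
    by_cases h : lexLt t s
    · have : {p : ZSeq × (ℕ → Bool) | lexLt t s} = Set.univ := by ext; simp [h]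
      rw [this]; exact isOpen_univ
    · have : {p : ZSeq × (ℕ → Bool) | lexLt t s} = ∅ := by ext; simp [h]
      rw [this]; exact isOpen_empty
  exact ((ray1_preim s).inter (ray2_preim t)).union
    (((ray2_preim t).inter hK).union (hK.inter (ray1_preim s)))

def psiZ : CSeq → ZSeq := fun x n => (x n).1

lemma psi1_continuous : Continuous psiZ := by
  apply continuous_generateFrom_iff.mpr
  intro S hS
  simp only [Set.mem_union, Set.mem_setOf_eq] at hS
  obtain ⟨a, rfl⟩ | ⟨a, rfl⟩ := hS
  · apply cseq_isOpen_of
    rintro x ⟨m, hm, hs⟩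
    refine ⟨m, fun y hy => ⟨m, fun k hk => ?_, ?_⟩⟩
    · show a k = (y k).1
      rw [hy k hk.le]
      exact hm k hk
    · show a m < (y m).1
      rw [hy m le_rfl]
      exact hs
  · apply cseq_isOpen_of
    rintro x ⟨m, hm, hs⟩
    refine ⟨m, fun y hy => ⟨m, fun k hk => ?_, ?_⟩⟩
    · show (y k).1 = a k
      rw [hy k hk.le]
      exact hm k hk
    · show (y m).1 < a m
      rw [hy m le_rfl]
      exact hs

def psiB : CSeq → ℕ → Bool := fun x n => (x n).2

lemma psi2_continuous : Continuous psiB := by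
  apply continuous_pi
  intro n
  rw [continuous_def]
  intro s _
  apply cseq_isOpen_of
  intro x hx
  refine ⟨n, fun y hy => ?_⟩
  show (y n).2 ∈ s
  rw [hy n le_rfl]
  exact hx

def phiEquiv : ZSeq × (ℕ → Bool) ≃ CSeq where
  toFun := phi
  invFun x := (psiZ x, psiB x)
  left_inv p := rfl
  right_inv x := rfl

def H2 : (ZSeq × (ℕ → Bool)) ≃ₜ CSeq where
  toEquiv := phiEquiv
  continuous_toFun := phi_continuous
  continuous_invFun := by exact psi1_continuous.prodMk psi2_continuous

/-- (Relation between cosine and exponential models.) The map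
`h(t, s, ω) = (t, n ↦ (sₙ, ωₙ))` is a homeomorphism from
`([0,∞) × ℤ^ℕ) × {L,R}^ℕ` (product of the standard topology on `[0,∞)`, the
lexicographic order topology on `ℤ^ℕ`, and the product of discrete topologies on
`{L,R}^ℕ`) onto `ℳ = [0,∞) × (ℤ × {L,R})^ℕ` with the topology `τ_ℳ`. -/
theorem cosine_exponential_model_homeomorphism :
    ∃ H : ({t : ℝ // 0 ≤ t} × ZSeq × (ℕ → Bool)) ≃ₜ ({t : ℝ // 0 ≤ t} × CSeq),
      ∀ (t : {t : ℝ // 0 ≤ t}) (s : ZSeq) (ω : ℕ → Bool),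
        H (t, s, ω) = (t, fun n => (s n, ω n)) := by
  exact ⟨(Homeomorph.refl _).prodCongr H2, fun t s ω => rfl⟩
end

section
/- The connected components of the open set Ω = {z ∈ ℂ : ¬(Im(cosh z) = 0 ∧ 1 ≤ |Re(cosh z)|)} = cosh⁻¹(ℂ ∖ X) are exactly the open horizontal strips U_K = {z ∈ ℂ : Kπ < Im z < (K+1)π} for K ∈ ℤ; that is, for every z ∈ Ω there is a unique K ∈ ℤ with Kπ < Im z < (K+1)π, and the connected component of Ω containing z equals U_K. -/
open Complex Real Set

lemma cosh_re' (z : ℂ) :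
    (Complex.cosh z).re = Real.cosh z.re * Real.cos z.im := by
  rw [show z = (z.re : ℂ) + (z.im : ℂ) * Complex.I from (Complex.re_add_im z).symm,
    Complex.cosh_add, Complex.cosh_mul_I, Complex.sinh_mul_I,
    ← Complex.ofReal_cosh, ← Complex.ofReal_sinh, ← Complex.ofReal_cos, ← Complex.ofReal_sin]
  simp [Complex.cos_ofReal_re, Complex.sin_ofReal_re, Complex.cosh_ofReal_re,
    Complex.sinh_ofReal_re, Complex.cos_ofReal_im, Complex.sin_ofReal_im,
    Complex.cosh_ofReal_im, Complex.sinh_ofReal_im]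

lemma cosh_im' (z : ℂ) :
    (Complex.cosh z).im = Real.sinh z.re * Real.sin z.im := by
  rw [show z = (z.re : ℂ) + (z.im : ℂ) * Complex.I from (Complex.re_add_im z).symm,
    Complex.cosh_add, Complex.cosh_mul_I, Complex.sinh_mul_I,
    ← Complex.ofReal_cosh, ← Complex.ofReal_sinh, ← Complex.ofReal_cos, ← Complex.ofReal_sin]
  simp [Complex.cos_ofReal_re, Complex.sin_ofReal_re, Complex.cosh_ofReal_re,
    Complex.sinh_ofReal_re, Complex.cos_ofReal_im, Complex.sin_ofReal_im,
    Complex.cosh_ofReal_im, Complex.sinh_ofReal_im]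

lemma mem_omega_iff (z : ℂ) :
    z ∈ {z : ℂ | ¬ ((Complex.cosh z).im = 0 ∧ 1 ≤ |(Complex.cosh z).re|)} ↔
      Real.sin z.im ≠ 0 := by
  simp only [Set.mem_setOf_eq, cosh_re', cosh_im']
  constructor
  · intro h hs
    apply h
    refine ⟨by rw [hs, mul_zero], ?_⟩
    have hc : |Real.cos z.im| = 1 := by
      have h1 := Real.sin_sq_add_cos_sq z.im
      have h2 := _root_.sq_abs (Real.cos z.im)
      have h3 := abs_nonneg (Real.cos z.im)
      nlinarith
    rw [abs_mul, hc, mul_one, _root_.abs_of_nonneg (le_trans zero_le_one (Real.one_le_cosh z.re))]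
    exact Real.one_le_cosh z.re
  · rintro hs ⟨h1, h2⟩
    have hx : Real.sinh z.re = 0 := by
      rcases mul_eq_zero.mp h1 with h | h
      · exact h
      · exact absurd h hs
    rw [Real.sinh_eq_zero.mp hx, Real.cosh_zero, one_mul] at h2
    have hsq : Real.sin z.im ^ 2 = 0 := by
      have h1 := Real.sin_sq_add_cos_sq z.im
      have h3 := Real.abs_cos_le_one z.im
      have h4 := _root_.sq_abs (Real.cos z.im)
      nlinarith
    exact hs (by simpa using (pow_eq_zero_iff two_ne_zero).mp hsq)

lemma sin_ne_zero_of_strip {K : ℤ} {y : ℝ} (h1 : (K : ℝ) * Real.pi < y)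
    (h2 : y < ((K : ℝ) + 1) * Real.pi) : Real.sin y ≠ 0 := by
  intro h
  rcases Real.sin_eq_zero_iff.mp h with ⟨n, hn⟩
  rw [← hn] at h1 h2
  have hpi := Real.pi_pos
  have hl : (K : ℝ) < n := lt_of_mul_lt_mul_right h1 hpi.le
  have hr : (n : ℝ) < (K : ℝ) + 1 := lt_of_mul_lt_mul_right h2 hpi.le
  have hl' : K < n := by exact_mod_cast hl
  have hr' : n < K + 1 := by exact_mod_cast hr
  omega

/-- The connected components of
`Ω = cosh⁻¹(ℂ ∖ X) = {z : ¬(Im(cosh z) = 0 ∧ 1 ≤ |Re(cosh z)|)}` are exactly the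
open horizontal strips `U_K = {z : Kπ < Im z < (K+1)π}`, `K ∈ ℤ`: every `z ∈ Ω`
lies in a unique strip `U_K`, and the connected component of `Ω` containing `z`
equals `U_K`. -/
theorem coshSq_partition_components :
    ∀ z ∈ {z : ℂ | ¬ ((Complex.cosh z).im = 0 ∧ 1 ≤ |(Complex.cosh z).re|)},
      ∃! K : ℤ, ((K : ℝ) * Real.pi < z.im ∧ z.im < ((K : ℝ) + 1) * Real.pi) ∧
        connectedComponentIn
            {z : ℂ | ¬ ((Complex.cosh z).im = 0 ∧ 1 ≤ |(Complex.cosh z).re|)} z =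
          {w : ℂ | (K : ℝ) * Real.pi < w.im ∧ w.im < ((K : ℝ) + 1) * Real.pi} := by
  set Ω := {z : ℂ | ¬ ((Complex.cosh z).im = 0 ∧ 1 ≤ |(Complex.cosh z).re|)} with hΩ
  intro z hz
  have hpi := Real.pi_pos
  have hzsin : Real.sin z.im ≠ 0 := (mem_omega_iff z).mp hz
  -- choose K = ⌊z.im / π⌋
  set K : ℤ := ⌊z.im / Real.pi⌋ with hK
  have hK1 : (K : ℝ) * Real.pi ≤ z.im := by
    have := Int.floor_le (z.im / Real.pi)
    calc (K : ℝ) * Real.pi ≤ (z.im / Real.pi) * Real.pi := by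
          exact mul_le_mul_of_nonneg_right this hpi.le
      _ = z.im := by field_simp
  have hK2 : z.im < ((K : ℝ) + 1) * Real.pi := by
    have := Int.lt_floor_add_one (z.im / Real.pi)
    calc z.im = (z.im / Real.pi) * Real.pi := by field_simp
      _ < ((K : ℝ) + 1) * Real.pi := by
          exact mul_lt_mul_of_pos_right this hpi
  have hK1' : (K : ℝ) * Real.pi < z.im := by
    rcases lt_or_eq_of_le hK1 with h | h
    · exact h
    · exact absurd (by rw [← h]; exact Real.sin_int_mul_pi K) hzsin
  -- the strip
  set S : Set ℂ := {w : ℂ | (K : ℝ) * Real.pi < w.im ∧ w.im < ((K : ℝ) + 1) * Real.pi} with hS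
  have hSsub : S ⊆ Ω := fun w hw => (mem_omega_iff w).mpr (sin_ne_zero_of_strip hw.1 hw.2)
  have hSconv : Convex ℝ S := by
    have : S = Complex.im ⁻¹' Set.Ioo ((K : ℝ) * Real.pi) (((K : ℝ) + 1) * Real.pi) := rfl
    rw [this]
    exact (convex_Ioo _ _).linear_preimage Complex.imLm
  have hzS : z ∈ S := ⟨hK1', hK2⟩
  have hcomp : connectedComponentIn Ω z = S := by
    apply Set.Subset.antisymm
    · -- component ⊆ strip
      intro w hw
      have hconn : IsPreconnected (Complex.im '' connectedComponentIn Ω z) :=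
        isPreconnected_connectedComponentIn.image _ Complex.continuous_im.continuousOn
      have hord := hconn.ordConnected
      have hzim : z.im ∈ Complex.im '' connectedComponentIn Ω z :=
        ⟨z, mem_connectedComponentIn hz, rfl⟩
      have hwim : w.im ∈ Complex.im '' connectedComponentIn Ω z := ⟨w, hw, rfl⟩
      have hno : ∀ n : ℤ, ((n : ℝ) * Real.pi) ∉ Complex.im '' connectedComponentIn Ω z := by
        rintro n ⟨u, hu, hu'⟩
        have := (mem_omega_iff u).mp (connectedComponentIn_subset Ω z hu)
        rw [hu'] at this
        exact this (Real.sin_int_mul_pi n)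
      constructor
      · by_contra h
        push_neg at h
        have : ((K : ℝ) * Real.pi) ∈ Complex.im '' connectedComponentIn Ω z :=
          hord.out hwim hzim ⟨h, hK1'.le⟩
        exact hno K this
      · by_contra h
        push_neg at h
        have : (((K : ℝ) + 1) * Real.pi) ∈ Complex.im '' connectedComponentIn Ω z := by
          have := hord.out hzim hwim ⟨hK2.le, h⟩
          push_cast at this ⊢
          exact this
        have := hno (K + 1)
        push_cast at this
        exact this ‹_›
    · exact hSconv.isPreconnected.subset_connectedComponentIn hzS hSsub
  refine ⟨K, ⟨⟨hK1', hK2⟩, hcomp⟩, ?_⟩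
  rintro K' ⟨⟨h1, h2⟩, _⟩
  have hA : (K' : ℝ) < (K : ℝ) + 1 := lt_of_mul_lt_mul_right (h1.trans hK2) hpi.le
  have hB : (K : ℝ) < (K' : ℝ) + 1 := lt_of_mul_lt_mul_right (hK1'.trans h2) hpi.le
  have hA' : K' < K + 1 := by exact_mod_cast hA
  have hB' : K < K' + 1 := by exact_mod_cast hB
  omega
end
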